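/- Let Λ ⊂ ℝ^n be a full-rank lattice, σ_s, σ_w > 0 with σ_s < σ_w, α = σ_s²/(σ_s²+σ_w²) and σ_eff² = σ_s²σ_w²/(σ_s²+σ_w²). Let X ~ D_{Λ, σ_s} and W ~ N(0, σ_w² I_n) be independent, let P_e(Λ) = Pr[(α−1)X + αW ∉ V(Λ)], and let P_0(Λ) = Pr[X = 0] = ((2πσ_s²)^{n/2} · f_{σ_s}(Λ))^{−1}. Then P_e(Λ) ≥ (1/2)·(1 − P_0(Λ)). -/

import Mathlib

/-!
For a nonzero lattice point `x`, the half-space `{w | ⟪w, x⟫ ≤ 0}` lies in the error region: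
when `α < 1/2`, the point `(α - 1) x + α w` is strictly closer to `-x` than to `0`, so it leaves
the Voronoi cell. By symmetry of the Gaussian this half-space has mass `1/2`, hence every
transmitted point except `0` is decoded wrongly with probability at least `1/2`; here
`α < 1/2` is exactly `σs < σw`. Averaging over `X ~ D_{Λ,σs}` gives `P_e ≥ (1 - P(X = 0)) / 2`.
-/

open MeasureTheory Real Filter Pointwise
open scoped ENNReal RealInnerProductSpace

noncomputable section

/-- The (continuous) Gaussian density with parameter `σ` on `ℝⁿ`:
`f_σ(x) = (2πσ²)^{-n/2} exp(-‖x‖²/(2σ²))`. -/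
def gaussF (n : ℕ) (σ : ℝ) (x : EuclideanSpace ℝ (Fin n)) : ℝ :=
  (2 * π * σ ^ 2) ^ (-(n : ℝ) / 2) * Real.exp (-‖x‖ ^ 2 / (2 * σ ^ 2))

/-- The Gaussian mass `f_σ(S) = Σ_{y ∈ S} f_σ(y)` of a (countable) set `S ⊆ ℝⁿ`. -/
def gaussMass (n : ℕ) (σ : ℝ) (S : Set (EuclideanSpace ℝ (Fin n))) : ℝ :=
  ∑' y : S, gaussF n σ y

/-- The Gaussian measure `N(0, σ² Iₙ)` on `ℝⁿ`, given by its density w.r.t. Lebesgue measure. -/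
def gaussMeasure (n : ℕ) (σ : ℝ) : Measure (EuclideanSpace ℝ (Fin n)) :=
  volume.withDensity fun x => ENNReal.ofReal (gaussF n σ x)

/-- The coset `S + t` of a set `S ⊆ ℝⁿ`, i.e. `{x | x - t ∈ S}`. -/
def coset (n : ℕ) (S : Set (EuclideanSpace ℝ (Fin n))) (t : EuclideanSpace ℝ (Fin n)) :
    Set (EuclideanSpace ℝ (Fin n)) := {x | x - t ∈ S}

/-- The Voronoi cell of `S`: `{x | ⟪x,y⟫ ≤ ‖y‖²/2 for all y ∈ S}`. -/
def voronoi (n : ℕ) (S : Set (EuclideanSpace ℝ (Fin n))) : Set (EuclideanSpace ℝ (Fin n)) :=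
  {x | ∀ y ∈ S, ⟪x, y⟫ ≤ ‖y‖ ^ 2 / 2}

/-- The inverse error function `err⁻¹_ε(Λ)`: the least `s > 0` such that a standard Gaussian
leaves `s · V(Λ)` with probability at most `ε`. -/
def errInv (n : ℕ) (ε : ℝ) (S : Set (EuclideanSpace ℝ (Fin n))) : ℝ :=
  sInf {s : ℝ | 0 < s ∧ gaussMeasure n 1 ((s • voronoi n S)ᶜ) ≤ ENNReal.ofReal ε}

/-- The Shannon entropy (in nats) of the discrete Gaussian `D_{S,σ}` supported on `S`,
which assigns mass `f_σ(y)/f_σ(S)` to each `y ∈ S`. -/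
def dgEntropy (n : ℕ) (σ : ℝ) (S : Set (EuclideanSpace ℝ (Fin n))) : ℝ :=
  -∑' y : S, (gaussF n σ y / gaussMass n σ S) * Real.log (gaussF n σ y / gaussMass n σ S)

/-- The flatness factor `ε_Λ(σ) = sup_{x ∈ V(Λ)} |V(Λ)·f_σ(Λ+x) − 1|`. -/
def flatness (n : ℕ) (L : Submodule ℤ (EuclideanSpace ℝ (Fin n))) (σ : ℝ) : ℝ :=
  ⨆ x : voronoi n (L : Set (EuclideanSpace ℝ (Fin n))),
    |ZLattice.covolume L volume *
        gaussMass n σ (coset n (L : Set (EuclideanSpace ℝ (Fin n))) x) - 1|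

namespace ZLattice

variable {E : Type*} [NormedAddCommGroup E] [NormedSpace ℝ E] [FiniteDimensional ℝ E]

/-- Gaussian decay beats the polynomial decay `‖z‖ ^ (-2k)`, which is summable for `2k > rank L`. -/
theorem summable_exp_neg_mul_norm_sq (L : Submodule ℤ E) [DiscreteTopology L] {c : ℝ}
    (hc : 0 < c) : Summable fun z : L => rexp (-c * ‖(z : E)‖ ^ 2) := by
  set k := Module.finrank ℤ L + 1
  have hk : -(2 * k : ℝ) < -Module.finrank ℤ L := by push_cast [k]; linarith
  refine Summable.of_norm_bounded_eventually
    ((summable_norm_rpow L _ hk).mul_left (k.factorial / c ^ k)) ?_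
  filter_upwards [eventually_cofinite_ne 0] with z hz
  have ht : 0 < ‖z‖ := norm_pos_iff.mpr hz
  have hexp : (c * ‖z‖ ^ 2) ^ k / k.factorial ≤ rexp (c * ‖z‖ ^ 2) :=
    pow_div_factorial_le_exp _ (by positivity) k
  calc ‖rexp (-c * ‖(z : E)‖ ^ 2)‖ = (rexp (c * ‖z‖ ^ 2))⁻¹ := by
        rw [Real.norm_of_nonneg (exp_pos _).le, neg_mul, exp_neg, Submodule.coe_norm]
    _ ≤ ((c * ‖z‖ ^ 2) ^ k / k.factorial)⁻¹ := inv_anti₀ (by positivity) hexp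
    _ = k.factorial / c ^ k * ‖z‖ ^ (-(2 * k : ℝ)) := by
        rw [Real.rpow_neg ht.le, show (2 * k : ℝ) = ((2 * k : ℕ) : ℝ) by push_cast; ring,
          Real.rpow_natCast, pow_mul]
        field_simp
        ring

end ZLattice

section Gaussian

variable {n : ℕ} {σ : ℝ}

theorem gaussF_eq_mul_exp (x : EuclideanSpace ℝ (Fin n)) :
    gaussF n σ x = (2 * π * σ ^ 2) ^ (-(n : ℝ) / 2) * rexp (-(2 * σ ^ 2)⁻¹ * ‖x‖ ^ 2) := by
  rw [gaussF]
  congr 2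
  ring

theorem gaussF_pos (hσ : σ ≠ 0) (x : EuclideanSpace ℝ (Fin n)) : 0 < gaussF n σ x := by
  have : 0 < 2 * π * σ ^ 2 := by positivity
  unfold gaussF
  positivity

theorem gaussF_neg (x : EuclideanSpace ℝ (Fin n)) : gaussF n σ (-x) = gaussF n σ x := by
  rw [gaussF, norm_neg, gaussF]

theorem gaussF_zero : gaussF n σ 0 = ((2 * π * σ ^ 2) ^ ((n : ℝ) / 2))⁻¹ := by
  rw [gaussF, norm_zero, neg_div, Real.rpow_neg (by positivity)]
  simp

theorem integral_gaussF (hσ : σ ≠ 0) : ∫ x, gaussF n σ x = 1 := by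
  have hb : 0 < (2 * σ ^ 2)⁻¹ := by positivity
  simp_rw [gaussF_eq_mul_exp]
  rw [integral_const_mul, GaussianFourier.integral_rexp_neg_mul_sq_norm hb,
    finrank_euclideanSpace_fin, div_inv_eq_mul, show π * (2 * σ ^ 2) = 2 * π * σ ^ 2 by ring,
    ← Real.rpow_add (by positivity), neg_div, neg_add_cancel, Real.rpow_zero]

theorem integrable_gaussF (hσ : σ ≠ 0) : Integrable (gaussF n σ) :=
  .of_integral_ne_zero (by rw [integral_gaussF hσ]; exact one_ne_zero)

theorem setIntegral_gaussF_le_one (hσ : σ ≠ 0) (s : Set (EuclideanSpace ℝ (Fin n))) :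
    ∫ x in s, gaussF n σ x ≤ 1 :=
  (setIntegral_le_integral (integrable_gaussF hσ)
    (.of_forall fun x => (gaussF_pos hσ x).le)).trans_eq (integral_gaussF hσ)

theorem summable_gaussF (L : Submodule ℤ (EuclideanSpace ℝ (Fin n))) [DiscreteTopology L]
    (hσ : σ ≠ 0) : Summable fun z : L => gaussF n σ z := by
  simp_rw [gaussF_eq_mul_exp]
  exact (ZLattice.summable_exp_neg_mul_norm_sq L (by positivity)).mul_left _

end Gaussian

/-- Reflection `w ↦ -w` swaps the two closed half-spaces bounded by `x⊥`, which together
cover the space. -/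
theorem half_integral_le_setIntegral_inner_nonpos {E : Type*} [NormedAddCommGroup E]
    [InnerProductSpace ℝ E] [MeasurableSpace E] [BorelSpace E] {μ : Measure E}
    [μ.IsNegInvariant] {f : E → ℝ} (hf : Integrable f μ) (hf0 : 0 ≤ f)
    (hf_neg : ∀ w, f (-w) = f w) (x : E) :
    (∫ w, f w ∂μ) / 2 ≤ ∫ w in {w | ⟪w, x⟫ ≤ 0}, f w ∂μ := by
  set T : Set E := {w | ⟪w, x⟫ ≤ 0}
  have hT : MeasurableSet T := (isClosed_le (by fun_prop) continuous_const).measurableSet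
  have h_neg : ∫ w in Neg.neg ⁻¹' T, f w ∂μ = ∫ w in T, f w ∂μ := by
    simpa only [hf_neg] using (Measure.measurePreserving_neg μ).setIntegral_preimage_emb
      (Homeomorph.neg E).measurableEmbedding f T
  have h_compl : ∫ w in Tᶜ, f w ∂μ ≤ ∫ w in Neg.neg ⁻¹' T, f w ∂μ := by
    refine setIntegral_mono_set hf.integrableOn (.of_forall hf0)
      (.of_forall fun w (hw : w ∈ Tᶜ) => ?_)
    change ⟪-w, x⟫ ≤ 0
    rw [inner_neg_left, neg_nonpos]
    exact (not_le.mp (show ¬⟪w, x⟫ ≤ 0 from hw)).le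
  linarith [integral_add_compl hT hf]

theorem sub_one_smul_add_smul_notMem_voronoi {n : ℕ} {S : Set (EuclideanSpace ℝ (Fin n))}
    {x w : EuclideanSpace ℝ (Fin n)} {α : ℝ} (hxS : -x ∈ S) (hx : x ≠ 0) (hα0 : 0 ≤ α)
    (hα : α < 1 / 2) (hw : ⟪w, x⟫ ≤ 0) : (α - 1) • x + α • w ∉ voronoi n S := by
  intro hmem
  have h := hmem (-x) hxS
  rw [inner_neg_right, inner_add_left, real_inner_smul_left, real_inner_smul_left,
    real_inner_self_eq_norm_sq, norm_neg] at h
  have hx2 : 0 < ‖x‖ ^ 2 := by positivity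
  nlinarith [mul_nonpos_of_nonneg_of_nonpos hα0 hw]

theorem mul_one_sub_le_tsum_mul {ι : Type*} {p I : ι → ℝ} {c : ℝ} (i₀ : ι) (hp : HasSum p 1)
    (hp0 : ∀ i, 0 ≤ p i) (hI0 : ∀ i, 0 ≤ I i) (hI1 : ∀ i, I i ≤ 1) (hc : ∀ i ≠ i₀, c ≤ I i) :
    c * (1 - p i₀) ≤ ∑' i, p i * I i := by
  classical
  have hpI : Summable fun i => p i * I i :=
    .of_nonneg_of_le (fun i => mul_nonneg (hp0 i) (hI0 i))
      (fun i => mul_le_of_le_one_right (hp0 i) (hI1 i)) hp.summable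
  have h_lower : HasSum (fun i => c * p i - if i = i₀ then c * p i₀ else 0) (c * (1 - p i₀)) := by
    simpa only [mul_one, mul_one_sub] using (hp.mul_left c).sub (hasSum_ite_eq i₀ (c * p i₀))
  refine hasSum_le (fun i => ?_) h_lower hpI.hasSum
  split_ifs with h
  · subst h
    linarith [mul_nonneg (hp0 i) (hI0 i)]
  · rw [sub_zero, mul_comm]
    exact mul_le_mul_of_nonneg_left (hc i h) (hp0 i)

theorem half_le_setIntegral_gaussF_notMem_voronoi {n : ℕ} {σ α : ℝ} (hσ : σ ≠ 0)
    {S : Set (EuclideanSpace ℝ (Fin n))} {x : EuclideanSpace ℝ (Fin n)} (hxS : -x ∈ S)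
    (hx : x ≠ 0) (hα0 : 0 ≤ α) (hα : α < 1 / 2) :
    1 / 2 ≤ ∫ w in {w | (α - 1) • x + α • w ∉ voronoi n S}, gaussF n σ w := by
  have hf0 : ∀ᵐ w, 0 ≤ gaussF n σ w := .of_forall fun w => (gaussF_pos hσ w).le
  calc 1 / 2 = (∫ w, gaussF n σ w) / 2 := by rw [integral_gaussF hσ]
    _ ≤ ∫ w in {w | ⟪w, x⟫ ≤ 0}, gaussF n σ w :=
      half_integral_le_setIntegral_inner_nonpos (integrable_gaussF hσ)
        (fun w => (gaussF_pos hσ w).le) gaussF_neg x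
    _ ≤ _ := setIntegral_mono_set (integrable_gaussF hσ).integrableOn (ae_restrict_of_ae hf0)
      (.of_forall fun _ hw => sub_one_smul_add_smul_notMem_voronoi hxS hx hα0 hα hw)

theorem error_probability_vs_mass_of_zero_general (n : ℕ) (L : Submodule ℤ (EuclideanSpace ℝ (Fin n)))
    [DiscreteTopology L]
    (σs σw : ℝ) (hσs : 0 < σs) (hsw : σs < σw)
    (α : ℝ)
    (hα : α = σs ^ 2 / (σs ^ 2 + σw ^ 2))
    (Pe : ℝ)
    (hPe : Pe = ∑' x : (L : Set (EuclideanSpace ℝ (Fin n))),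
        (gaussF n σs x / gaussMass n σs (L : Set (EuclideanSpace ℝ (Fin n)))) *
          ∫ w in {w : EuclideanSpace ℝ (Fin n) |
              (α - 1) • (x : EuclideanSpace ℝ (Fin n)) + α • w ∉ voronoi n (L : Set (EuclideanSpace ℝ (Fin n)))},
            gaussF n σw w)
    (P0 : ℝ)
    (hP0 : P0 = ((2 * π * σs ^ 2) ^ ((n : ℝ) / 2) * gaussMass n σs (L : Set (EuclideanSpace ℝ (Fin n))))⁻¹) :
    (1 / 2) * (1 - P0) ≤ Pe := by
  have hσw : σw ≠ 0 := (hσs.trans hsw).ne'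
  have hα0 : 0 ≤ α := by rw [hα]; positivity
  have hα2 : α < 1 / 2 := by
    rw [hα, div_lt_iff₀ (by positivity)]
    nlinarith
  set M := gaussMass n σs (L : Set (EuclideanSpace ℝ (Fin n)))
  have hsum : Summable fun x : (L : Set (EuclideanSpace ℝ (Fin n))) => gaussF n σs x :=
    summable_gaussF L hσs.ne'
  have hM0 : 0 < M := hsum.tsum_pos (fun _ => (gaussF_pos hσs.ne' _).le) ⟨0, L.zero_mem⟩
    (gaussF_pos hσs.ne' _)
  have hp : HasSum (fun x : (L : Set (EuclideanSpace ℝ (Fin n))) => gaussF n σs x / M) 1 := by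
    rw [← div_self hM0.ne']
    exact hsum.hasSum.div_const M
  have hP0_eq : P0 = gaussF n σs 0 / M := by
    rw [hP0, gaussF_zero, mul_inv, ← div_eq_mul_inv]
  rw [hPe, hP0_eq]
  refine mul_one_sub_le_tsum_mul (ι := (L : Set (EuclideanSpace ℝ (Fin n)))) (0 : L) hp
    (fun _ => div_nonneg (gaussF_pos hσs.ne' _).le hM0.le)
    (fun _ => setIntegral_nonneg_of_ae (.of_forall fun _ => (gaussF_pos hσw _).le))
    (fun _ => setIntegral_gaussF_le_one hσw _)
    (fun x hx => half_le_setIntegral_gaussF_notMem_voronoi hσw (L.neg_mem x.2)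
      (fun h => hx (Subtype.ext h)) hα0 hα2)

/-- for `σ_s < σ_w`, the MAP error probability of the centered discrete
Gaussian satisfies `P_e(Λ) ≥ (1/2)(1 − P₀(Λ))`. -/
theorem error_probability_vs_mass_of_zero (n : ℕ) (L : Submodule ℤ (EuclideanSpace ℝ (Fin n)))
    [DiscreteTopology L] [IsZLattice ℝ L]
    (σs σw : ℝ) (hσs : 0 < σs) (hσw : 0 < σw) (hsw : σs < σw)
    (α σeff : ℝ)
    (hα : α = σs ^ 2 / (σs ^ 2 + σw ^ 2))
    (hσeff : σeff = Real.sqrt (σs ^ 2 * σw ^ 2 / (σs ^ 2 + σw ^ 2)))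
    (Pe : ℝ)
    (hPe : Pe = ∑' x : (L : Set (EuclideanSpace ℝ (Fin n))),
        (gaussF n σs x / gaussMass n σs (L : Set (EuclideanSpace ℝ (Fin n)))) *
          ∫ w in {w : EuclideanSpace ℝ (Fin n) |
              (α - 1) • (x : EuclideanSpace ℝ (Fin n)) + α • w ∉ voronoi n (L : Set (EuclideanSpace ℝ (Fin n)))},
            gaussF n σw w)
    (P0 : ℝ)
    (hP0 : P0 = ((2 * π * σs ^ 2) ^ ((n : ℝ) / 2) * gaussMass n σs (L : Set (EuclideanSpace ℝ (Fin n))))⁻¹) :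
    (1 / 2) * (1 - P0) ≤ Pe :=
  error_probability_vs_mass_of_zero_general n L σs σw hσs hsw α hα Pe hPe P0 hP0
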